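/- arXiv:2301.10813 — 2 statements merged into one kernel-verified Lean document; each statement's English description precedes it below -/
import Mathlib

section
/- Second-order oracle bound: under the assumption L_fair(wv_ρ) ≤ P_D(E_{f∼ρ}[ℓ_fair(f,x)] ≥ 1/2), one has L_fair(wv_ρ) ≤ 4·E_{(f,f')∼ρ×ρ}[L_fair(f,f')]. -/
/-!
The second-order Markov inequality turns `P(E_ρ[ℓ] ≥ 1/2)` into `4 · E_D[(E_ρ[ℓ])²]`, and by
Fubini `E_D[(E_ρ[ℓ])²]` is the ρ²-average of the tandem loss `E_D[ℓ(f,·) ℓ(f',·)]`.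
-/

open MeasureTheory Function

lemma sq_mul_measureReal_le_integral_sq {α : Type*} [MeasurableSpace α] {μ : Measure α}
    [IsFiniteMeasure μ] {g : α → ℝ} (hg : Integrable (fun x => g x ^ 2) μ) {t : ℝ} (ht : 0 ≤ t) :
    t ^ 2 * μ.real {x | t ≤ g x} ≤ ∫ x, g x ^ 2 ∂μ :=
  calc t ^ 2 * μ.real {x | t ≤ g x}
      ≤ t ^ 2 * μ.real {x | t ^ 2 ≤ g x ^ 2} := by
        refine mul_le_mul_of_nonneg_left (measureReal_mono ?_) (sq_nonneg t)
        exact fun x (hx : t ≤ g x) => pow_le_pow_left₀ ht hx 2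
    _ ≤ ∫ x, g x ^ 2 ∂μ :=
        mul_meas_ge_le_integral_of_nonneg (ae_of_all _ fun x => sq_nonneg _) hg _

section Tandem

variable {X F : Type*} [MeasurableSpace F] {ρ : Measure F} [IsFiniteMeasure ρ]
  {ℓ : F → X → ℝ} {C : ℝ}

lemma norm_integral_left_le (hC : ∀ f x, ‖ℓ f x‖ ≤ C) (x : X) :
    ‖∫ f, ℓ f x ∂ρ‖ ≤ C * ρ.real Set.univ :=
  norm_integral_le_of_norm_le_const (ae_of_all _ fun f => hC f x)

variable [MeasurableSpace X] {D : Measure X} [IsFiniteMeasure D]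

lemma measurable_integral_left_of_uncurry (hmeas : Measurable (uncurry ℓ)) :
    Measurable fun x => ∫ f, ℓ f x ∂ρ :=
  hmeas.stronglyMeasurable.integral_prod_left.measurable

lemma integrable_integral_left_sq (hmeas : Measurable (uncurry ℓ)) (hC : ∀ f x, ‖ℓ f x‖ ≤ C) :
    Integrable (fun x => (∫ f, ℓ f x ∂ρ) ^ 2) D := by
  have hg := measurable_integral_left_of_uncurry (ρ := ρ) hmeas
  simp only [sq]
  exact (Integrable.of_bound hg.aestronglyMeasurable _
    (ae_of_all _ (norm_integral_left_le hC))).mul_bdd hg.aestronglyMeasurable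
    (ae_of_all _ (norm_integral_left_le hC))

theorem integral_integral_integral_mul_eq_integral_sq (hmeas : Measurable (uncurry ℓ))
    (hC : ∀ f x, ‖ℓ f x‖ ≤ C) :
    ∫ f, ∫ f', ∫ x, ℓ f x * ℓ f' x ∂D ∂ρ ∂ρ = ∫ x, (∫ f, ℓ f x ∂ρ) ^ 2 ∂D := by
  set g : X → ℝ := fun x => ∫ f, ℓ f x ∂ρ
  have hℓ : Integrable (uncurry ℓ) (ρ.prod D) :=
    .of_bound hmeas.aestronglyMeasurable C (ae_of_all _ fun p => hC p.1 p.2)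
  have hinner (f : F) : Integrable (uncurry fun f' x => ℓ f x * ℓ f' x) (ρ.prod D) :=
    hℓ.bdd_mul (hmeas.comp (measurable_const.prodMk measurable_snd)).aestronglyMeasurable
      (ae_of_all _ fun p => hC f p.2)
  have houter : Integrable (uncurry fun f x => ℓ f x * g x) (ρ.prod D) :=
    hℓ.mul_bdd
      ((measurable_integral_left_of_uncurry hmeas).comp measurable_snd).aestronglyMeasurable
      (ae_of_all _ fun p => norm_integral_left_le hC p.2)
  calc ∫ f, ∫ f', ∫ x, ℓ f x * ℓ f' x ∂D ∂ρ ∂ρ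
      = ∫ f, ∫ x, ∫ f', ℓ f x * ℓ f' x ∂ρ ∂D ∂ρ := by
        congr 1 with f
        exact integral_integral_swap (hinner f)
    _ = ∫ f, ∫ x, ℓ f x * g x ∂D ∂ρ := by simp only [g, integral_const_mul]
    _ = ∫ x, ∫ f, ℓ f x * g x ∂ρ ∂D := integral_integral_swap houter
    _ = ∫ x, g x ^ 2 ∂D := by simp only [g, integral_mul_const, sq]

end Tandem

/-- Second-order oracle bound: under
`L_fair(wv_ρ) ≤ P_D(E_ρ[ℓ_fair(f,x)] ≥ 1/2)`, one has
`L_fair(wv_ρ) ≤ 4·E_{ρ²}[L_fair(f,f')]`. -/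
theorem stmt4 {X F : Type*} [MeasurableSpace X] [MeasurableSpace F]
    (D : Measure X) [IsProbabilityMeasure D] (ρ : Measure F) [IsProbabilityMeasure ρ]
    (ℓ : F → X → ℝ) (hmeas : Measurable (Function.uncurry ℓ))
    (hbin : ∀ f x, ℓ f x = 0 ∨ ℓ f x = 1)
    (Lwv : ℝ)
    (hwv : Lwv ≤ (D {x | 1 / 2 ≤ ∫ f, ℓ f x ∂ρ}).toReal) :
    Lwv ≤ 4 * ∫ f, ∫ f', ∫ x, ℓ f x * ℓ f' x ∂D ∂ρ ∂ρ := by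
  have hbound : ∀ f x, ‖ℓ f x‖ ≤ 1 := fun f x => by rcases hbin f x with h | h <;> simp [h]
  have hmarkov := sq_mul_measureReal_le_integral_sq (μ := D)
    (integrable_integral_left_sq (ρ := ρ) hmeas hbound) (t := 1 / 2) (by norm_num)
  rw [measureReal_def] at hmarkov
  rw [integral_integral_integral_mul_eq_integral_sq hmeas hbound]
  linarith
end

section
/- C-tandem oracle bound: if E_{f∼ρ}[L_fair(f)] < 1/2 and L_fair(wv_ρ) ≤ P_D(E_ρ[ℓ_fair(f,x)] ≥ 1/2), then L_fair(wv_ρ) ≤ (E_{ρ²}[L_fair(f,f')] − (E_ρ[L_fair(f)])²) / (E_{ρ²}[L_fair(f,f')] − E_ρ[L_fair(f)] + 1/4). -/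
open MeasureTheory

private lemma intble_of_bounded {α : Type*} [MeasurableSpace α] (m : Measure α)
    [IsFiniteMeasure m] {g : α → ℝ} (hg : AEStronglyMeasurable g m)
    (hb : ∀ a, ‖g a‖ ≤ 1) : Integrable g m :=
  (integrable_const (1:ℝ)).mono' hg (Filter.Eventually.of_forall hb)

/-- C-tandem oracle bound. -/
theorem stmt6 {X F : Type*} [MeasurableSpace X] [MeasurableSpace F]
    (D : Measure X) [IsProbabilityMeasure D] (ρ : Measure F) [IsProbabilityMeasure ρ]
    (ℓ : F → X → ℝ) (hmeas : Measurable (Function.uncurry ℓ))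
    (hbin : ∀ f x, ℓ f x = 0 ∨ ℓ f x = 1)
    (hmean : ∫ f, ∫ x, ℓ f x ∂D ∂ρ < 1 / 2)
    (Lwv : ℝ)
    (hwv : Lwv ≤ (D {x | 1 / 2 ≤ ∫ f, ℓ f x ∂ρ}).toReal) :
    Lwv ≤ ((∫ f, ∫ f', ∫ x, ℓ f x * ℓ f' x ∂D ∂ρ ∂ρ) - (∫ f, ∫ x, ℓ f x ∂D ∂ρ) ^ 2) /
      ((∫ f, ∫ f', ∫ x, ℓ f x * ℓ f' x ∂D ∂ρ ∂ρ) - (∫ f, ∫ x, ℓ f x ∂D ∂ρ) + 1 / 4) := by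
  -- basic bounds on ℓ
  have hb0 : ∀ f x, 0 ≤ ℓ f x := fun f x => by rcases hbin f x with h | h <;> simp [h]
  have hb1 : ∀ f x, ℓ f x ≤ 1 := fun f x => by rcases hbin f x with h | h <;> simp [h]
  have hnorm : ∀ f x, ‖ℓ f x‖ ≤ 1 := fun f x => by
    rw [Real.norm_eq_abs, abs_le]; exact ⟨by linarith [hb0 f x], hb1 f x⟩
  -- Z x = ∫ f, ℓ f x ∂ρ
  set Z : X → ℝ := fun x => ∫ f, ℓ f x ∂ρ with hZdef
  have hZm : StronglyMeasurable Z := by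
    have hg : Measurable (fun p : X × F => ℓ p.2 p.1) := hmeas.comp measurable_swap
    exact hg.stronglyMeasurable.integral_prod_right'
  have hZ0 : ∀ x, 0 ≤ Z x := fun x => integral_nonneg fun f => hb0 f x
  have hZn : ∀ x, ‖Z x‖ ≤ 1 := fun x => by
    calc ‖Z x‖ ≤ ∫ f, ‖ℓ f x‖ ∂ρ := norm_integral_le_integral_norm _
      _ ≤ ∫ f, (1:ℝ) ∂ρ := by
          refine integral_mono_of_nonneg (Filter.Eventually.of_forall fun f => norm_nonneg _)
            (integrable_const 1) (Filter.Eventually.of_forall fun f => hnorm f x)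
      _ = 1 := by simp
  have hZ1 : ∀ x, Z x ≤ 1 := fun x => le_trans (le_abs_self _) (hZn x)
  -- Fubini 1
  have hintℓ : Integrable (Function.uncurry ℓ) (ρ.prod D) :=
    intble_of_bounded _ hmeas.aestronglyMeasurable (fun p => hnorm p.1 p.2)
  have hA : ∫ f, ∫ x, ℓ f x ∂D ∂ρ = ∫ x, Z x ∂D := integral_integral_swap hintℓ
  -- Fubini 2
  have hB : ∫ f, ∫ f', ∫ x, ℓ f x * ℓ f' x ∂D ∂ρ ∂ρ = ∫ x, Z x ^ 2 ∂D := by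
    have step1 : ∀ f, ∫ f', ∫ x, ℓ f x * ℓ f' x ∂D ∂ρ = ∫ x, ℓ f x * Z x ∂D := by
      intro f
      have hmeas1 : Measurable (Function.uncurry fun f' x => ℓ f x * ℓ f' x) := by
        exact (hmeas.comp (measurable_const.prodMk measurable_snd)).mul hmeas
      have hint1 : Integrable (Function.uncurry fun f' x => ℓ f x * ℓ f' x) (ρ.prod D) := by
        refine intble_of_bounded _ hmeas1.aestronglyMeasurable fun p => ?_
        rw [Function.uncurry, Real.norm_eq_abs, abs_mul]
        calc |ℓ f p.2| * |ℓ p.1 p.2| ≤ 1 * 1 := by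
              exact mul_le_mul (hnorm f p.2) (hnorm p.1 p.2) (abs_nonneg _) zero_le_one
          _ = 1 := by ring
      rw [integral_integral_swap hint1]
      simp only [integral_const_mul]
      rfl
    simp only [step1]
    have hmeas2 : Measurable (Function.uncurry fun f x => ℓ f x * Z x) := by
      exact hmeas.mul (hZm.measurable.comp measurable_snd)
    have hint2 : Integrable (Function.uncurry fun f x => ℓ f x * Z x) (ρ.prod D) := by
      refine intble_of_bounded _ hmeas2.aestronglyMeasurable fun p => ?_
      rw [Function.uncurry, Real.norm_eq_abs, abs_mul]
      calc |ℓ p.1 p.2| * |Z p.2| ≤ 1 * 1 := by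
            exact mul_le_mul (hnorm p.1 p.2) (hZn p.2) (abs_nonneg _) zero_le_one
        _ = 1 := by ring
    rw [integral_integral_swap hint2]
    refine integral_congr_ae (Filter.Eventually.of_forall fun x => ?_)
    show ∫ f, ℓ f x * Z x ∂ρ = Z x ^ 2
    rw [integral_mul_const, sq]
  rw [hA] at hmean
  rw [hA, hB]
  -- notation
  set m := ∫ x, Z x ∂D with hmdef
  set M := ∫ x, Z x ^ 2 ∂D with hMdef
  have ht : (0:ℝ) < 1/2 - m := by linarith
  -- integrability over D
  have hZint : Integrable Z D := intble_of_bounded _ hZm.aestronglyMeasurable hZn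
  have hZ2int : Integrable (fun x => Z x ^ 2) D := by
    refine intble_of_bounded _ (hZm.measurable.pow_const 2).aestronglyMeasurable fun x => ?_
    rw [Real.norm_eq_abs, abs_le]
    constructor <;> nlinarith [hZ0 x, hZ1 x]
  -- expansion
  have expand : ∀ c : ℝ, ∫ x, (Z x + c)^2 ∂D = M + 2*c*m + c^2 := by
    intro c
    have h1 : (fun x => (Z x + c)^2) = fun x => Z x^2 + ((2*c)*Z x + c^2) := by
      funext x; ring
    have i3 : Integrable (fun x => (2*c) * Z x) D := hZint.const_mul _
    have i2 : Integrable (fun x => (2*c) * Z x + c^2) D := i3.add (integrable_const _)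
    rw [h1, integral_add hZ2int i2, integral_add i3 (integrable_const _),
      integral_const_mul, integral_const]
    simp [hmdef, hMdef]
    ring
  have hVnn : 0 ≤ M - m^2 := by
    have e : ∫ x, (Z x + (-m))^2 ∂D = M - m^2 := by rw [expand]; ring
    rw [← e]; exact integral_nonneg fun x => sq_nonneg _
  set s := (M - m^2)/(1/2 - m) with hsdef
  have hs0 : 0 ≤ s := div_nonneg hVnn ht.le
  -- the set
  set S := {x | 1/2 ≤ Z x} with hSdef
  have hSm : MeasurableSet S := measurableSet_le measurable_const hZm.measurable
  have hP0 : 0 ≤ (D S).toReal := ENNReal.toReal_nonneg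
  have hint3 : Integrable (fun x => (Z x + (s - m))^2) D := by
    have h1 : (fun x => (Z x + (s-m))^2) = fun x => Z x^2 + ((2*(s-m))*Z x + (s-m)^2) := by
      funext x; ring
    rw [h1]; exact hZ2int.add ((hZint.const_mul _).add (integrable_const _))
  -- Markov / Cantelli
  have markov : (1/2 - m + s)^2 * (D S).toReal ≤ M - m^2 + s^2 := by
    have e2 : ∫ x, (Z x + (s - m))^2 ∂D = M - m^2 + s^2 := by rw [expand]; ring
    calc (1/2 - m + s)^2 * (D S).toReal = ∫ _x in S, (1/2 - m + s)^2 ∂D := by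
          rw [setIntegral_const]; simp [smul_eq_mul]; simp only [Measure.real]; ring
      _ ≤ ∫ x in S, (Z x + (s - m))^2 ∂D := by
          refine setIntegral_mono_on (integrable_const _).integrableOn hint3.integrableOn hSm
            fun x hx => ?_
          have hx' : 1/2 ≤ Z x := hx
          have h2 : 0 ≤ 1/2 - m + s := by linarith
          have h3 : 1/2 - m + s ≤ Z x + (s - m) := by linarith
          exact pow_le_pow_left₀ h2 h3 2
      _ ≤ ∫ x, (Z x + (s - m))^2 ∂D :=
          setIntegral_le_integral hint3 (Filter.Eventually.of_forall fun x => sq_nonneg _)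
      _ = M - m^2 + s^2 := e2
  have hden : 0 < M - m + 1/4 := by nlinarith [mul_pos ht ht]
  have goal2 : (D S).toReal ≤ (M - m^2)/(M - m + 1/4) := by
    have hne : (1/2 - m) ≠ 0 := ne_of_gt ht
    have hts : s * (1/2 - m) = M - m^2 := div_mul_cancel₀ _ hne
    have e3 : (1/2 - m + s)^2 * (1/2 - m)^2 = (M - m + 1/4)^2 := by
      linear_combination (s*(1/2-m) + (M-m^2) + 2*(1/2-m)^2) * hts
    have e4 : (M - m^2 + s^2) * (1/2 - m)^2 = (M - m^2) * (M - m + 1/4) := by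
      linear_combination (s*(1/2-m) + (M-m^2)) * hts
    have h' := mul_le_mul_of_nonneg_right markov (sq_nonneg (1/2 - m))
    have h4 : (M - m + 1/4)^2 * (D S).toReal ≤ (M - m^2) * (M - m + 1/4) := by
      calc (M - m + 1/4)^2 * (D S).toReal
          = (1/2 - m + s)^2 * (D S).toReal * (1/2 - m)^2 := by rw [← e3]; ring
        _ ≤ (M - m^2 + s^2) * (1/2 - m)^2 := h'
        _ = (M - m^2) * (M - m + 1/4) := e4
    have h4' : ((D S).toReal * (M - m + 1/4)) * (M - m + 1/4)
        ≤ (M - m^2) * (M - m + 1/4) := by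
      calc ((D S).toReal * (M - m + 1/4)) * (M - m + 1/4)
          = (M - m + 1/4)^2 * (D S).toReal := by ring
        _ ≤ (M - m^2) * (M - m + 1/4) := h4
    have h5 : (D S).toReal * (M - m + 1/4) ≤ M - m^2 := le_of_mul_le_mul_right h4' hden
    rw [le_div_iff₀ hden]; exact h5
  have hwv' : Lwv ≤ (D S).toReal := hwv
  linarith
end
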